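/- arXiv:1912.03765 — 5 statements merged into one kernel-verified Lean document; each statement's English description precedes it below -/
import Mathlib

section
/- For every sequence (m_n) of positive integers and every δ with 0 < δ < 1, there exists a sequence (λ_n) of points of the open unit disk 𝔻 such that inf_{z∈𝔻} sup_n ∏_{k≠n} ρ(z, λ_k)^{m_k} ≥ δ. -/
open scoped BigOperators
open Metric Finset

noncomputable def blaschke (τ z : ℂ) : ℂ := (τ - z) / (1 - (starRingEnd ℂ) τ * z)

noncomputable def pseudoHyp (z w : ℂ) : ℝ :=
  ‖z - w‖ / ‖1 - (starRingEnd ℂ) z * w‖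

noncomputable def prodExcept (a : ℕ → ℝ) (n : ℕ) : ℝ :=
  ⨅ N : ℕ, ∏ k ∈ (Finset.range N).erase n, a k

def HinfOn (f : ℂ → ℂ) : Prop :=
  DifferentiableOn ℂ f (Metric.ball 0 1) ∧
    ∃ C : ℝ, ∀ z ∈ Metric.ball (0 : ℂ) 1, ‖f z‖ ≤ C

noncomputable def matApply {d : ℕ} (f : ℂ → ℂ) (M : Matrix (Fin d) (Fin d) ℂ) :
    Matrix (Fin d) (Fin d) ℂ :=
  ∑' k : ℕ, (iteratedDeriv k f 0 / (Nat.factorial k : ℂ)) • M ^ k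

noncomputable def matBlaschke {d : ℕ} (M : Matrix (Fin d) (Fin d) ℂ) (z : ℂ) : ℂ :=
  ((minpoly ℂ M).roots.map (fun μ => blaschke μ z)).prod

/-
Place the points `λ_k = 1 - ε_k` on the radius `[0, 1)`, with gaps `ε_0 = 1` and
`ε_{k+1} = c_k c_{k+1} ε_k`, where `c_k = η 2^{-k} / m_k` and `η = (1 - δ) / 8`. Two points of the
disk whose distances `s, t` to the circle satisfy `t ≤ c s` are pseudo-hyperbolically far apart:
`1 - ρ ≤ 4c`. Given `z`, with `t = 1 - |z|`, the scales `ε_k` are so separated that `t` is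
comparable to at most one of them, `ε_n`; every other factor then satisfies
`ρ(z, λ_k)^{m_k} ≥ 1 - 4 m_k c_k = 1 - 4η 2^{-k}`, and the Weierstrass product inequality bounds
the product over `k ≠ n` below by `1 - 8η ≥ δ`.
-/

open Filter Topology

theorem Finset.one_sub_sum_le_prod {ι R : Type*} [CommRing R] [LinearOrder R]
    [IsStrictOrderedRing R] {s : Finset ι} {f b : ι → R} (hb : ∀ i ∈ s, 0 ≤ b i)
    (hf : ∀ i ∈ s, 0 ≤ f i) (hbf : ∀ i ∈ s, 1 - b i ≤ f i) :
    1 - ∑ i ∈ s, b i ≤ ∏ i ∈ s, f i := by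
  classical
  induction s using Finset.induction_on with
  | empty => simp
  | insert a s ha ih =>
    simp only [Finset.mem_insert, forall_eq_or_imp] at hb hf hbf
    rw [Finset.sum_insert ha, Finset.prod_insert ha]
    have hprod := ih hb.2 hf.2 hbf.2
    have hprod0 : 0 ≤ ∏ i ∈ s, f i := Finset.prod_nonneg hf.2
    have hsum0 : 0 ≤ ∑ i ∈ s, b i := Finset.sum_nonneg hb.2
    rcases le_total (b a) 1 with hba | hba
    · nlinarith [mul_le_mul_of_nonneg_left hprod (sub_nonneg.2 hba),
        mul_le_mul_of_nonneg_right hbf.1 hprod0, mul_nonneg hb.1 hsum0]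
    · nlinarith [mul_nonneg hf.1 hprod0]

theorem norm_one_sub_conj_mul_sq (z w : ℂ) :
    ‖1 - starRingEnd ℂ z * w‖ ^ 2 = ‖z - w‖ ^ 2 + (1 - ‖z‖ ^ 2) * (1 - ‖w‖ ^ 2) := by
  simp only [Complex.sq_norm, Complex.normSq_apply, Complex.sub_re, Complex.sub_im,
    Complex.mul_re, Complex.mul_im, Complex.one_re, Complex.one_im, Complex.conj_re,
    Complex.conj_im]
  ring

theorem pseudoHyp_comm (z w : ℂ) : pseudoHyp z w = pseudoHyp w z := by
  rw [pseudoHyp, pseudoHyp, ← norm_neg (z - w), neg_sub, ← Complex.norm_conj (1 - _ * w)]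
  simp [mul_comm]

theorem pseudoHyp_nonneg (z w : ℂ) : 0 ≤ pseudoHyp z w :=
  div_nonneg (norm_nonneg _) (norm_nonneg _)

theorem pseudoHyp_le_one {z w : ℂ} (hz : ‖z‖ ≤ 1) (hw : ‖w‖ ≤ 1) : pseudoHyp z w ≤ 1 := by
  refine div_le_one_of_le₀ (pow_le_pow_iff_left₀ (norm_nonneg _) (norm_nonneg _)
    two_ne_zero |>.1 ?_) (norm_nonneg _)
  rw [norm_one_sub_conj_mul_sq]
  have : 0 ≤ (1 - ‖z‖ ^ 2) * (1 - ‖w‖ ^ 2) :=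
    mul_nonneg (by nlinarith [norm_nonneg z]) (by nlinarith [norm_nonneg w])
  linarith

theorem one_sub_pseudoHyp_mul_le {z w : ℂ} (hz : ‖z‖ < 1) (hw : ‖w‖ < 1) :
    (1 - pseudoHyp z w) * (1 - ‖w‖) ≤ 4 * (1 - ‖z‖) := by
  set D := ‖1 - starRingEnd ℂ z * w‖
  have hD : 1 - ‖w‖ ≤ D := by
    have := norm_sub_norm_le (1 : ℂ) (starRingEnd ℂ z * w)
    rw [norm_one, norm_mul, Complex.norm_conj] at this
    nlinarith [norm_nonneg z, norm_nonneg w]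
  have hD0 : 0 < D := by linarith
  have hρ0 := pseudoHyp_nonneg z w
  have hρ1 := pseudoHyp_le_one hz.le hw.le
  have hkey : (1 - pseudoHyp z w ^ 2) * D ^ 2 = (1 - ‖z‖ ^ 2) * (1 - ‖w‖ ^ 2) := by
    rw [pseudoHyp, div_pow, sub_mul, div_mul_cancel₀ _ (by positivity), norm_one_sub_conj_mul_sq]
    ring
  have hsq : (1 - pseudoHyp z w) * (1 - ‖w‖) ^ 2 ≤ (1 - pseudoHyp z w ^ 2) * D ^ 2 := by
    gcongr
    · nlinarith
    · nlinarith
  have hfactor : (1 - ‖z‖ ^ 2) * (1 - ‖w‖ ^ 2) ≤ 4 * (1 - ‖z‖) * (1 - ‖w‖) := by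
    have hz' : 0 ≤ 1 - ‖z‖ := by linarith
    have hw' : 0 ≤ 1 - ‖w‖ := by linarith
    have h4 : (1 + ‖z‖) * (1 + ‖w‖) ≤ 4 := by nlinarith [norm_nonneg z]
    nlinarith [mul_le_mul_of_nonneg_left h4 (mul_nonneg hz' hw')]
  rw [hkey] at hsq
  refine le_of_mul_le_mul_right ?_ (sub_pos.2 hw)
  nlinarith

theorem one_sub_pseudoHyp_le_of_le_or_le {z w : ℂ} {c : ℝ} (hz : ‖z‖ < 1) (hw : ‖w‖ < 1)
    (h : 1 - ‖z‖ ≤ c * (1 - ‖w‖) ∨ 1 - ‖w‖ ≤ c * (1 - ‖z‖)) :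
    1 - pseudoHyp z w ≤ 4 * c := by
  rcases h with h | h
  · have := one_sub_pseudoHyp_mul_le hz hw
    refine le_of_mul_le_mul_right ?_ (sub_pos.2 hw)
    linarith
  · have := one_sub_pseudoHyp_mul_le hw hz
    rw [pseudoHyp_comm] at this
    refine le_of_mul_le_mul_right ?_ (sub_pos.2 hz)
    linarith

theorem one_sub_pow_le_mul_one_sub {x : ℝ} (hx : 0 ≤ x) (m : ℕ) : 1 - x ^ m ≤ m * (1 - x) := by
  have := one_add_mul_le_pow (a := x - 1) (by linarith) m
  rw [add_sub_cancel] at this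
  linarith

theorem le_prodExcept {a : ℕ → ℝ} {n : ℕ} {x : ℝ}
    (h : ∀ N, x ≤ ∏ k ∈ (range N).erase n, a k) : x ≤ prodExcept a n :=
  le_ciInf h

theorem bddAbove_range_prodExcept {a : ℕ → ℝ} (ha : ∀ k, 0 ≤ a k) :
    BddAbove (Set.range (prodExcept a)) := by
  refine ⟨1, Set.forall_mem_range.2 fun n => ?_⟩
  have hbdd : BddBelow (Set.range fun N => ∏ k ∈ (range N).erase n, a k) :=
    ⟨0, Set.forall_mem_range.2 fun N => prod_nonneg fun k _ => ha k⟩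
  simpa [prodExcept] using ciInf_le hbdd 0

theorem one_sub_tsum_le_prodExcept {a b : ℕ → ℝ} {n : ℕ} (ha : ∀ k, 0 ≤ a k)
    (hb : ∀ k, 0 ≤ b k) (hbs : Summable b) (hab : ∀ k ≠ n, 1 - b k ≤ a k) :
    1 - ∑' k, b k ≤ prodExcept a n := by
  refine le_prodExcept fun N => ?_
  calc 1 - ∑' k, b k ≤ 1 - ∑ k ∈ (range N).erase n, b k := by
        gcongr
        exact hbs.sum_le_tsum _ fun k _ => hb k
    _ ≤ ∏ k ∈ (range N).erase n, a k :=
        one_sub_sum_le_prod (fun k _ => hb k) (fun k _ => ha k)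
          fun k hk => hab k (ne_of_mem_erase hk)

noncomputable def gapSeq (c : ℕ → ℝ) : ℕ → ℝ
  | 0 => 1
  | k + 1 => c k * c (k + 1) * gapSeq c k

theorem gapSeq_pos {c : ℕ → ℝ} (hc0 : ∀ k, 0 < c k) (k : ℕ) : 0 < gapSeq c k := by
  induction k with
  | zero => exact one_pos
  | succ k ih => exact mul_pos (mul_pos (hc0 k) (hc0 (k + 1))) ih

theorem gapSeq_le_one {c : ℕ → ℝ} (hc0 : ∀ k, 0 < c k) (hc1 : ∀ k, c k ≤ 1) (k : ℕ) :
    gapSeq c k ≤ 1 := by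
  induction k with
  | zero => exact le_rfl
  | succ k ih =>
    exact mul_le_one₀ (mul_le_one₀ (hc1 k) (hc0 _).le (hc1 _)) (gapSeq_pos hc0 k).le ih

theorem antitone_mul_gapSeq {c : ℕ → ℝ} (hc0 : ∀ k, 0 < c k) (hc1 : ∀ k, c k ≤ 1) :
    Antitone fun k => c k * gapSeq c k := by
  refine antitone_nat_of_succ_le fun k => ?_
  calc c (k + 1) * gapSeq c (k + 1) ≤ 1 * gapSeq c (k + 1) := by
        gcongr
        exacts [(gapSeq_pos hc0 _).le, hc1 _]
    _ = c (k + 1) * (c k * gapSeq c k) := by rw [one_mul, gapSeq]; ring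
    _ ≤ 1 * (c k * gapSeq c k) := by
        gcongr
        exacts [mul_nonneg (hc0 k).le (gapSeq_pos hc0 k).le, hc1 _]
    _ = c k * gapSeq c k := one_mul _

theorem exists_forall_ne_le_or_le {c : ℕ → ℝ} (hc0 : ∀ k, 0 < c k) (hc1 : ∀ k, c k ≤ 1)
    (hc : Tendsto c atTop (𝓝 0)) {t : ℝ} (ht : 0 < t) :
    ∃ n, ∀ k ≠ n, t ≤ c k * gapSeq c k ∨ gapSeq c k ≤ c k * t := by
  have hex : ∃ j, c j * gapSeq c j < t := by
    obtain ⟨j, hj⟩ := (hc.eventually (gt_mem_nhds ht)).exists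
    exact ⟨j, lt_of_le_of_lt (mul_le_of_le_one_right (hc0 j).le (gapSeq_le_one hc0 hc1 j)) hj⟩
  classical
  refine ⟨Nat.find hex, fun k hk => ?_⟩
  rcases Nat.lt_or_gt_of_ne hk with hlt | hgt
  · exact Or.inl (not_lt.1 (Nat.find_min hex hlt))
  · obtain ⟨j, rfl⟩ := Nat.exists_eq_add_of_lt hgt
    set n := Nat.find hex
    have hj : c (n + j) * gapSeq c (n + j) < t :=
      lt_of_le_of_lt (antitone_mul_gapSeq hc0 hc1 (Nat.le_add_right _ _)) (Nat.find_spec hex)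
    right
    calc gapSeq c (n + j + 1) = c (n + j + 1) * (c (n + j) * gapSeq c (n + j)) := by
          rw [gapSeq]; ring
      _ ≤ c (n + j + 1) * t := by gcongr; exact (hc0 _).le

theorem norm_one_sub_gapSeq {c : ℕ → ℝ} (hc0 : ∀ k, 0 < c k) (hc1 : ∀ k, c k ≤ 1) (k : ℕ) :
    ‖((1 - gapSeq c k : ℝ) : ℂ)‖ = 1 - gapSeq c k := by
  rw [Complex.norm_real, Real.norm_of_nonneg (sub_nonneg.2 (gapSeq_le_one hc0 hc1 k))]

theorem exists_forall_ne_one_sub_pseudoHyp_le {c : ℕ → ℝ} (hc0 : ∀ k, 0 < c k)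
    (hc1 : ∀ k, c k ≤ 1) (hc : Tendsto c atTop (𝓝 0)) {z : ℂ} (hz : ‖z‖ < 1) :
    ∃ n, ∀ k ≠ n, 1 - pseudoHyp z ((1 - gapSeq c k : ℝ) : ℂ) ≤ 4 * c k := by
  obtain ⟨n, hn⟩ := exists_forall_ne_le_or_le hc0 hc1 hc (sub_pos.2 hz)
  refine ⟨n, fun k hk => one_sub_pseudoHyp_le_of_le_or_le hz ?_ ?_⟩
  · rw [norm_one_sub_gapSeq hc0 hc1]
    linarith [gapSeq_pos hc0 k]
  · rw [norm_one_sub_gapSeq hc0 hc1, sub_sub_cancel]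
    exact hn k hk

/-- For every sequence of multiplicities and every `0 < δ < 1` there is a sequence in the
unit disk which is uniformly strongly separated with constant at least `δ`. -/
theorem exists_uniformly_strongly_separated
    (m : ℕ → ℕ) (hm : ∀ n, 0 < m n) (δ : ℝ) (hδ0 : 0 < δ) (hδ1 : δ < 1) :
    ∃ l : ℕ → ℂ, (∀ n, l n ∈ Metric.ball (0 : ℂ) 1) ∧
      ∀ z ∈ Metric.ball (0 : ℂ) 1,
        δ ≤ ⨆ n : ℕ, prodExcept (fun k => pseudoHyp z (l k) ^ m k) n := by
  set η := (1 - δ) / 8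
  have hη0 : 0 < η := by simp only [η]; linarith
  have hη1 : η ≤ 1 := by simp only [η]; linarith
  set c : ℕ → ℝ := fun k => η * (1 / 2) ^ k / m k
  have hm1 : ∀ k, (1 : ℝ) ≤ m k := fun k => Nat.one_le_cast.2 (hm k)
  have hc0 : ∀ k, 0 < c k := fun k => by have := hm1 k; positivity
  have hc1 : ∀ k, c k ≤ 1 := fun k => div_le_one_of_le₀
    ((mul_le_one₀ hη1 (by positivity) (pow_le_one₀ (by norm_num) (by norm_num))).trans (hm1 k))
    (by positivity)
  have hc : Tendsto c atTop (𝓝 0) := by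
    refine squeeze_zero (fun k => (hc0 k).le) (fun k => div_le_self (by positivity) (hm1 k)) ?_
    simpa using (tendsto_pow_atTop_nhds_zero_of_lt_one (r := (1 / 2 : ℝ)) (by norm_num)
      (by norm_num)).const_mul η
  have hmc : ∀ k, (m k : ℝ) * (4 * c k) = 4 * η * (1 / 2) ^ k := fun k => by
    simp only [c]; field_simp [(zero_lt_one.trans_le (hm1 k)).ne']
  refine ⟨fun k => ((1 - gapSeq c k : ℝ) : ℂ), fun k => ?_, fun z hz => ?_⟩
  · rw [mem_ball_zero_iff, norm_one_sub_gapSeq hc0 hc1]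
    linarith [gapSeq_pos hc0 k]
  obtain ⟨n, hn⟩ := exists_forall_ne_one_sub_pseudoHyp_le hc0 hc1 hc (mem_ball_zero_iff.1 hz)
  have hfactor : ∀ k ≠ n,
      1 - 4 * η * (1 / 2) ^ k ≤ pseudoHyp z ((1 - gapSeq c k : ℝ) : ℂ) ^ m k := fun k hk => by
    rw [sub_le_comm, ← hmc]
    exact (one_sub_pow_le_mul_one_sub (pseudoHyp_nonneg _ _) _).trans
      (mul_le_mul_of_nonneg_left (hn k hk) (Nat.cast_nonneg _))
  have hprod_nonneg : ∀ k, 0 ≤ pseudoHyp z ((1 - gapSeq c k : ℝ) : ℂ) ^ m k :=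
    fun k => pow_nonneg (pseudoHyp_nonneg _ _) _
  calc δ = 1 - ∑' k : ℕ, 4 * η * (1 / 2) ^ k := by rw [tsum_mul_left, tsum_geometric_two]; ring
    _ ≤ _ := one_sub_tsum_le_prodExcept hprod_nonneg (fun k => by positivity)
        (summable_geometric_two.mul_left _) hfactor
    _ ≤ _ := le_ciSup (bddAbove_range_prodExcept hprod_nonneg) n
end

section
/- Let (n_k) be a sequence of positive integers, let m_{k,j} (k ∈ ℕ, 1 ≤ j ≤ n_k) be positive integers, and let 0 < δ < 1. Then there exist points λ_{k,j} ∈ 𝔻 (k ∈ ℕ, 1 ≤ j ≤ n_k) such that, setting B_k := ∏_{j=1}^{n_k} b_{λ_{k,j}}^{m_{k,j}}, one has inf_{z∈𝔻} sup_k ∏_{l≠k} |B_l(z)| ≥ δ. -/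
open scoped BigOperators
open Metric Finset

/-!
All zeros of `B_k` are put at one real point `c_k ∈ [0, 1)`, so that `|B_k| = |b_{c_k}|^{M_k}` with
`M_k = ∑ⱼ m_{k,j}`. With radii `s_k` satisfying `s_k^{M_k+1} = δ^{2^{-k-1}}`, the centers are
placed so that the intervals `{t : |c_k - t| < s_k (1 - c_k t)}` of `[0, 1)` are disjoint and
abut: `c_{k+1} = (c_k ⊕ s_k) ⊕ s_{k+1}`, where `⊕` is Möbius addition. Since `|b_c(z)| ≥
|c - |z|| / (1 - c|z|)` for `0 ≤ c < 1`, a point `z` is close to at most one center `c_K`, and for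
`k ≠ K` we get `|B_k(z)| ≥ s_k^{M_k} ≥ δ^{2^{-k-1}}`; the product over `k ≠ K` is then at least
`δ^{∑ 2^{-k-1}} ≥ δ`.
-/

-- `b ⊕ σ = tanh (artanh b + artanh σ)`: a hyperbolic step of length `artanh σ` from `b`.
noncomputable def mobiusAdd (b σ : ℝ) : ℝ := (b + σ) / (1 + σ * b)

section mobiusAdd

variable {b σ t : ℝ}

lemma le_mobiusAdd (hb0 : 0 ≤ b) (hb1 : b ≤ 1) (hσ : 0 ≤ σ) : b ≤ mobiusAdd b σ := by
  rw [mobiusAdd, le_div_iff₀ (by positivity)]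
  nlinarith [mul_nonneg hσ (mul_nonneg (sub_nonneg.2 hb1) (by linarith : (0:ℝ) ≤ 1 + b))]

lemma mobiusAdd_lt_one (hb0 : 0 ≤ b) (hb1 : b < 1) (hσ0 : 0 ≤ σ) (hσ1 : σ < 1) :
    mobiusAdd b σ < 1 := by
  rw [mobiusAdd, div_lt_one (by positivity)]
  nlinarith [mul_pos (sub_pos.2 hb1) (sub_pos.2 hσ1)]

lemma lt_mobiusAdd_of_abs_sub_lt (hb : 0 ≤ b) (hσ : 0 ≤ σ) (h : |b - t| < σ * (1 - b * t)) :
    t < mobiusAdd b σ := by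
  rw [mobiusAdd, lt_div_iff₀ (by positivity)]
  nlinarith [(abs_lt.1 h).1]

lemma mobiusAdd_mem_Ico (hb : b ∈ Set.Ico 0 1) (hσ0 : 0 ≤ σ) (hσ1 : σ < 1) :
    mobiusAdd b σ ∈ Set.Ico 0 1 :=
  ⟨hb.1.trans (le_mobiusAdd hb.1 hb.2.le hσ0), mobiusAdd_lt_one hb.1 hb.2 hσ0 hσ1⟩

-- `σ ↦ b ⊕ σ` is inverted by `c ↦ c ⊕ (-σ)`
lemma mobiusAdd_sub_self (hb : 0 ≤ b) (hσ : 0 ≤ σ) :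
    mobiusAdd b σ - σ = b * (1 - σ * mobiusAdd b σ) := by
  rw [mobiusAdd]
  field_simp
  ring

lemma lt_of_abs_mobiusAdd_sub_lt (hb : b ∈ Set.Ico 0 1) (hσ0 : 0 ≤ σ) (hσ1 : σ < 1)
    (h : |mobiusAdd b σ - t| < σ * (1 - mobiusAdd b σ * t)) : b < t := by
  have hpos : 0 < 1 - σ * mobiusAdd b σ := by nlinarith [(mobiusAdd_mem_Ico hb hσ0 hσ1).2]
  nlinarith [(abs_lt.1 h).2, mobiusAdd_sub_self hb.1 hσ0]

end mobiusAdd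

noncomputable def separatedCenters (s : ℕ → ℝ) : ℕ → ℝ
  | 0 => 0
  | l + 1 => mobiusAdd (mobiusAdd (separatedCenters s l) (s l)) (s (l + 1))

section separatedCenters

variable {s : ℕ → ℝ} (hs0 : ∀ l, 0 ≤ s l) (hs1 : ∀ l, s l < 1)
include hs0 hs1

lemma separatedCenters_mem_Ico (l : ℕ) : separatedCenters s l ∈ Set.Ico 0 1 := by
  induction l with
  | zero => simp [separatedCenters]
  | succ l ih => exact mobiusAdd_mem_Ico (mobiusAdd_mem_Ico ih (hs0 l) (hs1 l)) (hs0 _) (hs1 _)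

lemma monotone_mobiusAdd_separatedCenters :
    Monotone fun l => mobiusAdd (separatedCenters s l) (s l) := by
  refine monotone_nat_of_le_succ fun l => ?_
  have hl := mobiusAdd_mem_Ico (separatedCenters_mem_Ico hs0 hs1 l) (hs0 l) (hs1 l)
  have hl' := separatedCenters_mem_Ico hs0 hs1 (l + 1)
  calc mobiusAdd (separatedCenters s l) (s l)
      ≤ separatedCenters s (l + 1) := le_mobiusAdd hl.1 hl.2.le (hs0 _)
    _ ≤ _ := le_mobiusAdd hl'.1 hl'.2.le (hs0 _)

lemma eq_of_abs_sub_separatedCenters_lt {t : ℝ} {i j : ℕ}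
    (hi : |separatedCenters s i - t| < s i * (1 - separatedCenters s i * t))
    (hj : |separatedCenters s j - t| < s j * (1 - separatedCenters s j * t)) : i = j := by
  wlog hij : i < j generalizing i j
  · rcases (not_lt.1 hij).lt_or_eq with h | h
    · exact (this hj hi h).symm
    · exact h.symm
  obtain ⟨j, rfl⟩ := Nat.exists_eq_add_of_lt hij
  -- the interval around `c i` ends at `c i ⊕ s i`, the one around `c (i + j + 1)` starts at
  -- `c (i + j) ⊕ s (i + j)`
  have hti := lt_mobiusAdd_of_abs_sub_lt (separatedCenters_mem_Ico hs0 hs1 i).1 (hs0 i) hi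
  have hstart := mobiusAdd_mem_Ico (separatedCenters_mem_Ico hs0 hs1 (i + j))
    (hs0 (i + j)) (hs1 (i + j))
  have htj := lt_of_abs_mobiusAdd_sub_lt hstart (hs0 _) (hs1 _) hj
  have := monotone_mobiusAdd_separatedCenters hs0 hs1 (Nat.le_add_right i j)
  linarith

end separatedCenters

lemma abs_sub_div_le_norm_blaschke_ofReal {μ : ℝ} {z : ℂ} (hμ0 : 0 ≤ μ) (hμ1 : μ < 1)
    (hz : ‖z‖ < 1) : |μ - ‖z‖| / (1 - μ * ‖z‖) ≤ ‖blaschke μ z‖ := by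
  set t := ‖z‖ with ht
  have hden : 0 < 1 - μ * t := by nlinarith [norm_nonneg z]
  have ht2 : t ^ 2 = z.re ^ 2 + z.im ^ 2 := by
    rw [ht, Complex.sq_norm, Complex.normSq_apply]; ring
  have hnum : ‖(μ : ℂ) - z‖ ^ 2 = μ ^ 2 - 2 * μ * z.re + t ^ 2 := by
    rw [Complex.sq_norm, Complex.normSq_apply]
    simp only [Complex.sub_re, Complex.sub_im, Complex.ofReal_re, Complex.ofReal_im]
    linear_combination -ht2
  have hden' : ‖1 - (μ : ℂ) * z‖ ^ 2 = 1 - 2 * μ * z.re + μ ^ 2 * t ^ 2 := by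
    rw [Complex.sq_norm, Complex.normSq_apply]
    simp only [Complex.sub_re, Complex.sub_im, Complex.mul_re, Complex.mul_im, Complex.one_re,
      Complex.one_im, Complex.ofReal_re, Complex.ofReal_im]
    linear_combination -μ ^ 2 * ht2
  have hne : 0 < ‖1 - (μ : ℂ) * z‖ := hden.trans_le <| by
    simpa [abs_of_nonneg hμ0] using norm_sub_norm_le (1 : ℂ) (μ * z)
  rw [blaschke, Complex.conj_ofReal, norm_div, div_le_div_iff₀ hden hne,
    ← pow_le_pow_iff_left₀ (by positivity) (by positivity) two_ne_zero, mul_pow, mul_pow, sq_abs,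
    hnum, hden']
  -- the difference of the two sides is `2 μ (|z| - Re z) (1 - μ²) (1 - |z|²) ≥ 0`
  nlinarith [mul_nonneg (mul_nonneg (mul_nonneg hμ0 (sub_nonneg.2 (Complex.re_le_norm z)))
    (by nlinarith : (0:ℝ) ≤ 1 - μ ^ 2)) (by nlinarith [norm_nonneg z] : (0:ℝ) ≤ 1 - t ^ 2)]

lemma exists_forall_ne_le_norm_blaschke_separatedCenters {s : ℕ → ℝ} (hs0 : ∀ l, 0 ≤ s l)
    (hs1 : ∀ l, s l < 1) {z : ℂ} (hz : z ∈ ball (0 : ℂ) 1) :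
    ∃ K, ∀ i ≠ K, s i ≤ ‖blaschke (separatedCenters s i) z‖ := by
  rw [mem_ball_zero_iff] at hz
  set c := separatedCenters s
  obtain ⟨K, hK⟩ : ∃ K, ∀ i ≠ K, s i * (1 - c i * ‖z‖) ≤ |c i - ‖z‖| := by
    by_cases hclose : ∃ K, |c K - ‖z‖| < s K * (1 - c K * ‖z‖)
    · obtain ⟨K, hK⟩ := hclose
      exact ⟨K, fun i hi => not_lt.1 fun h =>
        hi (eq_of_abs_sub_separatedCenters_lt hs0 hs1 h hK)⟩
    · push Not at hclose
      exact ⟨0, fun i _ => hclose i⟩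
  refine ⟨K, fun i hi => ?_⟩
  obtain ⟨hc0, hc1⟩ := separatedCenters_mem_Ico hs0 hs1 i
  have hden : 0 < 1 - c i * ‖z‖ := by nlinarith [norm_nonneg z]
  exact ((le_div_iff₀ hden).2 (hK i hi)).trans (abs_sub_div_le_norm_blaschke_ofReal hc0 hc1 hz)

lemma le_prod_of_rpow_le_of_sum_le_one {ι : Type*} {S : Finset ι} {δ : ℝ} {w a : ι → ℝ}
    (hδ0 : 0 < δ) (hδ1 : δ ≤ 1) (hw : ∑ i ∈ S, w i ≤ 1) (ha : ∀ i ∈ S, δ ^ w i ≤ a i) :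
    δ ≤ ∏ i ∈ S, a i :=
  calc δ = δ ^ (1 : ℝ) := (Real.rpow_one δ).symm
    _ ≤ δ ^ ∑ i ∈ S, w i := Real.rpow_le_rpow_of_exponent_ge hδ0 hδ1 hw
    _ = ∏ i ∈ S, δ ^ w i := Real.rpow_sum_of_pos hδ0 _ _
    _ ≤ ∏ i ∈ S, a i := prod_le_prod (fun _ _ => (Real.rpow_pos_of_pos hδ0 _).le) ha

lemma le_iSup_prodExcept {a : ℕ → ℝ} (ha : ∀ i, 0 ≤ a i) {δ : ℝ} (K : ℕ)
    (h : ∀ N, δ ≤ ∏ i ∈ (range N).erase K, a i) : δ ≤ ⨆ k, prodExcept a k := by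
  have hle_one (k : ℕ) : prodExcept a k ≤ 1 :=
    (ciInf_le ⟨0, by rintro _ ⟨N, rfl⟩; exact prod_nonneg fun i _ => ha i⟩ 0).trans_eq (by simp)
  have hbdd : BddAbove (Set.range (prodExcept a)) := ⟨1, by rintro _ ⟨k, rfl⟩; exact hle_one k⟩
  exact (le_ciInf h).trans (le_ciSup hbdd K)

theorem exists_separated_finite_blaschke_products_general
    (nk : ℕ → ℕ)
    (m : ∀ k : ℕ, Fin (nk k) → ℕ)
    (δ : ℝ) (hδ0 : 0 < δ) (hδ1 : δ < 1) :
    ∃ l : ∀ k : ℕ, Fin (nk k) → ℂ,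
      (∀ k j, l k j ∈ Metric.ball (0 : ℂ) 1) ∧
      ∀ z ∈ Metric.ball (0 : ℂ) 1,
        δ ≤ ⨆ k : ℕ,
          prodExcept (fun i => ‖∏ j : Fin (nk i), blaschke (l i j) z ^ m i j‖) k := by
  set M : ℕ → ℕ := fun k => ∑ j, m k j
  set w : ℕ → ℝ := fun l => 1 / 2 / 2 ^ l
  set s : ℕ → ℝ := fun l => δ ^ (w l / (M l + 1))
  have hs0 : ∀ l, 0 ≤ s l := fun l => (Real.rpow_pos_of_pos hδ0 _).le
  have hs1 : ∀ l, s l < 1 := fun l => Real.rpow_lt_one hδ0.le hδ1 (by positivity)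
  refine ⟨fun k _ => separatedCenters s k, fun k _ => ?_, fun z hz => ?_⟩
  · obtain ⟨h0, h1⟩ := separatedCenters_mem_Ico hs0 hs1 k
    simpa [abs_of_nonneg h0] using h1
  obtain ⟨K, hK⟩ := exists_forall_ne_le_norm_blaschke_separatedCenters hs0 hs1 hz
  refine le_iSup_prodExcept (fun _ => norm_nonneg _) K fun N =>
    le_prod_of_rpow_le_of_sum_le_one hδ0 hδ1.le (w := w)
      (sum_le_hasSum _ (fun _ _ => by positivity) (hasSum_geometric_two' 1)) fun i hi => ?_
  calc δ ^ w i = s i ^ (M i + 1) := by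
        rw [← Real.rpow_natCast, ← Real.rpow_mul hδ0.le]; push_cast; field_simp
    _ ≤ s i ^ M i := pow_le_pow_of_le_one (hs0 i) (hs1 i).le (Nat.le_succ _)
    _ ≤ ‖blaschke (separatedCenters s i) z‖ ^ M i :=
        pow_le_pow_left₀ (hs0 i) (hK i (ne_of_mem_erase hi)) _
    _ = ‖∏ j, blaschke (separatedCenters s i) z ^ m i j‖ := by
        rw [norm_prod]; simp only [norm_pow]; rw [prod_pow_eq_pow_sum]

/-- For any sequence of finite Blaschke-product data there are points in the unit disk whose
associated finite Blaschke products are uniformly strongly separated with constant `δ`. -/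
theorem exists_separated_finite_blaschke_products
    (nk : ℕ → ℕ) (hnk : ∀ k, 0 < nk k)
    (m : ∀ k : ℕ, Fin (nk k) → ℕ) (hm : ∀ k j, 0 < m k j)
    (δ : ℝ) (hδ0 : 0 < δ) (hδ1 : δ < 1) :
    ∃ l : ∀ k : ℕ, Fin (nk k) → ℂ,
      (∀ k j, l k j ∈ Metric.ball (0 : ℂ) 1) ∧
      ∀ z ∈ Metric.ball (0 : ℂ) 1,
        δ ≤ ⨆ k : ℕ,
          prodExcept (fun i => ‖∏ j : Fin (nk i), blaschke (l i j) z ^ m i j‖) k :=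
  exists_separated_finite_blaschke_products_general nk m δ hδ0 hδ1
end

section
/- Let ν ∈ (0,1), let (M_n) be a sequence of positive integers with M_n → ∞, let (ρ_n) be a sequence in (0,1) with ρ_n^{M_n} = ν for every n, and let (t_n) be a sequence in (0,1) with t_n → 1. Then ((1 − t_n)/(1 − ρ_n²·t_n))^{M_n} → 0 as n → ∞. -/
/-!
Write `(1 - t) / (1 - r² t) = a / (a + b)` with `a = 1 - t` and `b = t (1 - r²)`. Bernoulli's
inequality bounds its `M`-th power by `a / (a + M b)`, and, applied once more to `r ^ M = ν`, gives
`1 - ν ≤ M (1 - r) ≤ M (1 - r²)`, so that `M b ≥ t (1 - ν)`. Hence the `M`-th power is at most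
`(1 - t) / (t (1 - ν))`, which tends to `0` as `t → 1`.
-/

open Filter

lemma div_add_pow_le_div_add_mul {K : Type*} [Field K] [LinearOrder K] [IsStrictOrderedRing K]
    {a b : K} (ha : 0 < a) (hb : 0 ≤ b) (n : ℕ) :
    (a / (a + b)) ^ n ≤ a / (a + n * b) := by
  have hx : 0 ≤ b / a := div_nonneg hb ha.le
  have hbernoulli : 1 + n * (b / a) ≤ (1 + b / a) ^ n :=
    one_add_mul_le_pow (by linarith) n
  calc (a / (a + b)) ^ n = ((1 + b / a) ^ n)⁻¹ := by
        rw [one_add_div ha.ne', div_pow, div_pow, inv_div]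
    _ ≤ (1 + n * (b / a))⁻¹ := inv_anti₀ (by positivity) hbernoulli
    _ = a / (a + n * b) := by
        rw [mul_div_assoc', one_add_div ha.ne', inv_div]

lemma one_sub_pow_le_mul_one_sub_sq {r : ℝ} (hr0 : 0 ≤ r) (hr1 : r ≤ 1) (n : ℕ) :
    1 - r ^ n ≤ n * (1 - r ^ 2) := by
  have hbernoulli := one_add_mul_sub_le_pow (by linarith : -1 ≤ r) n
  have : (n : ℝ) * (1 - r) ≤ n * (1 - r ^ 2) :=
    mul_le_mul_of_nonneg_left (by nlinarith) n.cast_nonneg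
  linarith

lemma one_sub_div_pow_le_of_pow_eq {ν r t : ℝ} {M : ℕ} (hν1 : ν < 1) (hr0 : 0 ≤ r) (hr1 : r ≤ 1)
    (hrM : r ^ M = ν) (ht0 : 0 < t) (ht1 : t < 1) :
    ((1 - t) / (1 - r ^ 2 * t)) ^ M ≤ (1 - t) / (t * (1 - ν)) := by
  have hb : 0 ≤ t * (1 - r ^ 2) := mul_nonneg ht0.le (by nlinarith)
  have hMb : t * (1 - ν) ≤ M * (t * (1 - r ^ 2)) := by
    rw [mul_left_comm, ← hrM]
    exact mul_le_mul_of_nonneg_left (one_sub_pow_le_mul_one_sub_sq hr0 hr1 M) ht0.le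
  calc ((1 - t) / (1 - r ^ 2 * t)) ^ M
      = ((1 - t) / ((1 - t) + t * (1 - r ^ 2))) ^ M := by ring_nf
    _ ≤ (1 - t) / ((1 - t) + M * (t * (1 - r ^ 2))) :=
        div_add_pow_le_div_add_mul (by linarith) hb M
    _ ≤ (1 - t) / (t * (1 - ν)) :=
        div_le_div_of_nonneg_left (by linarith) (mul_pos ht0 (by linarith)) (by linarith)

theorem tendsto_ratio_pow_zero_general
    (ν : ℝ) (hν1 : ν < 1)
    (M : ℕ → ℕ)
    (r : ℕ → ℝ) (hr0 : ∀ n, 0 < r n) (hr1 : ∀ n, r n < 1)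
    (hrM : ∀ n, r n ^ M n = ν)
    (t : ℕ → ℝ) (ht0 : ∀ n, 0 < t n) (ht1 : ∀ n, t n < 1)
    (ht : Tendsto t atTop (nhds 1)) :
    Tendsto (fun n => ((1 - t n) / (1 - r n ^ 2 * t n)) ^ M n) atTop (nhds 0) := by
  have hnonneg : ∀ n, 0 ≤ ((1 - t n) / (1 - r n ^ 2 * t n)) ^ M n := fun n => by
    have : r n ^ 2 * t n < 1 := by nlinarith [hr0 n, hr1 n, ht0 n, ht1 n]
    exact pow_nonneg (div_nonneg (by linarith [ht1 n]) (by linarith)) _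
  have hbound : Tendsto (fun n => (1 - t n) / (t n * (1 - ν))) atTop (nhds 0) := by
    have h := (ht.const_sub 1).div (ht.mul_const (1 - ν)) (by linarith)
    rwa [sub_self, zero_div] at h
  exact squeeze_zero hnonneg (fun n => one_sub_div_pow_le_of_pow_eq hν1 (hr0 n).le (hr1 n).le
    (hrM n) (ht0 n) (ht1 n)) hbound

/-- If `ρ_n^{M_n} = ν ∈ (0,1)` with `M_n → ∞` and `t_n → 1`, then
`((1 - t_n)/(1 - ρ_n² t_n))^{M_n} → 0`. -/
theorem tendsto_ratio_pow_zero
    (ν : ℝ) (hν0 : 0 < ν) (hν1 : ν < 1)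
    (M : ℕ → ℕ) (hMpos : ∀ n, 0 < M n) (hM : Tendsto M atTop atTop)
    (r : ℕ → ℝ) (hr0 : ∀ n, 0 < r n) (hr1 : ∀ n, r n < 1)
    (hrM : ∀ n, r n ^ M n = ν)
    (t : ℕ → ℝ) (ht0 : ∀ n, 0 < t n) (ht1 : ∀ n, t n < 1)
    (ht : Tendsto t atTop (nhds 1)) :
    Tendsto (fun n => ((1 - t n) / (1 - r n ^ 2 * t n)) ^ M n) atTop (nhds 0) :=
  tendsto_ratio_pow_zero_general ν hν1 M r hr0 hr1 hrM t ht0 ht1 ht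
end

section
/- Let (A_n) be a sequence of complex square matrices with all eigenvalues in 𝔻, and let M > 0 be a constant such that for every sequence (φ_n) in H^∞ with sup_n ‖φ_n‖_∞ ≤ 1 there exists f ∈ H^∞ with ‖f‖_∞ ≤ M and f(A_n) = φ_n(A_n) for all n. Then for every positive integer N and every ε > 0 there exist f₁, …, f_N ∈ H^∞ such that f_i(A_j) = δ_{i,j}·Id for i, j = 1, …, N and sup_{z∈𝔻} ∑_{j=1}^N |f_j(z)| ≤ M² + ε. -/
open scoped BigOperators
open Metric Finset

/-!
For each character `χ` of `ℤ/N`, interpolate the unimodular constants `χ(j)` at the `A_j` by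
some `ψ_χ` with `‖ψ_χ‖_∞ ≤ M`. By orthogonality of characters the averages
`F_i = N⁻¹ ∑_χ conj (χ i) ψ_χ` satisfy `F_i(A_j) = δ_ij`, and by Parseval
`∑_i |F_i z|² = N⁻¹ ∑_χ |ψ_χ z|² ≤ M²`. Since `f ↦ f(A)` is multiplicative on `H^∞` when the
spectrum of `A` lies in `𝔻`, the squares `f_i = F_i²` are the required functions.
-/

open Filter
open scoped NNReal ENNReal

section Taylor

open scoped Nat

noncomputable def taylorCoeff (f : ℂ → ℂ) (k : ℕ) : ℂ := iteratedDeriv k f 0 / k !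

lemma matApply_eq_tsum {d : ℕ} (f : ℂ → ℂ) (M : Matrix (Fin d) (Fin d) ℂ) :
    matApply f M = ∑' k, taylorCoeff f k • M ^ k := rfl

lemma taylorCoeff_const (c : ℂ) (k : ℕ) :
    taylorCoeff (fun _ => c) k = if k = 0 then c else 0 := by
  split_ifs with hk <;> simp [taylorCoeff, iteratedDeriv_const, hk]

lemma taylorCoeff_const_mul (c : ℂ) (f : ℂ → ℂ) (k : ℕ) :
    taylorCoeff (fun z => c * f z) k = c * taylorCoeff f k := by
  simp only [taylorCoeff, iteratedDeriv_const_mul_field, mul_div_assoc]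

lemma taylorCoeff_sum {ι : Type*} {s : Finset ι} {f : ι → ℂ → ℂ} {k : ℕ}
    (hf : ∀ i ∈ s, ContDiffAt ℂ k (f i) 0) :
    taylorCoeff (fun z => ∑ i ∈ s, f i z) k = ∑ i ∈ s, taylorCoeff (f i) k := by
  simp only [taylorCoeff, iteratedDeriv_fun_sum hf, Finset.sum_div]

lemma taylorCoeff_mul {f g : ℂ → ℂ} {n : ℕ} (hf : ContDiffAt ℂ n f 0) (hg : ContDiffAt ℂ n g 0) :
    taylorCoeff (fun z => f z * g z) n =
      ∑ k ∈ range (n + 1), taylorCoeff f k * taylorCoeff g (n - k) := by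
  rw [taylorCoeff, show (fun z => f z * g z) = f * g from rfl, iteratedDeriv_mul hf hg,
    Finset.sum_div]
  refine Finset.sum_congr rfl fun k hk => ?_
  have hkn : k ≤ n := Nat.lt_succ_iff.mp (Finset.mem_range.mp hk)
  have hfac : (n ! : ℂ) = n.choose k * k ! * (n - k)! := by
    exact_mod_cast (Nat.choose_mul_factorial_mul_factorial hkn).symm
  have hk0 : (k ! : ℂ) ≠ 0 := by exact_mod_cast k.factorial_ne_zero
  have hnk0 : ((n - k)! : ℂ) ≠ 0 := by exact_mod_cast (n - k).factorial_ne_zero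
  have hc0 : (n.choose k : ℂ) ≠ 0 := by exact_mod_cast (Nat.choose_pos hkn).ne'
  rw [hfac, taylorCoeff, taylorCoeff]
  field_simp

lemma summable_norm_taylorCoeff_mul_pow {f : ℂ → ℂ} (hf : DifferentiableOn ℂ f (ball 0 1))
    {r : ℝ} (hr₀ : 0 ≤ r) (hr₁ : r < 1) :
    Summable fun k => ‖taylorCoeff f k‖ * r ^ k := by
  obtain ⟨s, hrs, hs₁⟩ := exists_between hr₁
  have hs₀ : 0 < s := hr₀.trans_lt hrs
  have hsum : Summable fun k => taylorCoeff f k * (s : ℂ) ^ k := by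
    have hs : (s : ℂ) ∈ ball 0 1 := by simpa [abs_of_pos hs₀]
    refine (Complex.hasSum_taylorSeries_on_ball hf hs).summable.congr fun k => ?_
    simp only [taylorCoeff, smul_eq_mul, sub_zero]
    ring
  obtain ⟨C, hC⟩ := hsum.tendsto_atTop_zero.norm.bddAbove_range
  refine .of_nonneg_of_le (fun k => by positivity) (fun k => ?_)
    ((summable_geometric_of_lt_one (by positivity) ((div_lt_one hs₀).mpr hrs)).mul_left C)
  have hk : ‖taylorCoeff f k‖ * s ^ k ≤ C := by
    simpa [norm_mul, abs_of_pos hs₀] using hC ⟨k, rfl⟩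
  calc ‖taylorCoeff f k‖ * r ^ k = ‖taylorCoeff f k‖ * s ^ k * (r / s) ^ k := by
        rw [div_pow]; field_simp
    _ ≤ C * (r / s) ^ k := by gcongr

lemma DifferentiableOn.contDiffAt_zero {f : ℂ → ℂ} (hf : DifferentiableOn ℂ f (ball 0 1))
    (n : WithTop ℕ∞) : ContDiffAt ℂ n f 0 :=
  (hf.analyticAt (ball_mem_nhds 0 one_pos)).contDiffAt

end Taylor

section BanachAlgebra

variable {𝔸 : Type*} [NormedRing 𝔸] [NormedAlgebra ℂ 𝔸] [CompleteSpace 𝔸]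

lemma spectralRadius_lt_one_of_forall_norm_lt {a : 𝔸} (ha : ∀ μ ∈ spectrum ℂ a, ‖μ‖ < 1) :
    spectralRadius ℂ a < 1 := by
  rcases (spectrum ℂ a).eq_empty_or_nonempty with h | h
  · simp [spectralRadius, h]
  · obtain ⟨μ, hμ, hρ⟩ := spectrum.exists_nnnorm_eq_spectralRadius_of_nonempty h
    rw [← hρ]
    exact_mod_cast ha μ hμ

lemma eventually_norm_pow_le_of_spectralRadius_lt {a : 𝔸} {r : ℝ≥0}
    (h : spectralRadius ℂ a < r) : ∀ᶠ k in atTop, ‖a ^ k‖ ≤ r ^ k := by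
  have hlt := eventually_lt_of_limsup_lt
    ((spectrum.limsup_pow_nnnorm_pow_one_div_le_spectralRadius a).trans_lt h)
  filter_upwards [hlt, eventually_ge_atTop 1] with k hk hk1
  have hk0 : (k : ℝ) ≠ 0 := by positivity
  have := ENNReal.rpow_le_rpow hk.le (by positivity : (0 : ℝ) ≤ k)
  rw [← ENNReal.rpow_mul, one_div, inv_mul_cancel₀ hk0, ENNReal.rpow_one,
    ENNReal.rpow_natCast] at this
  exact_mod_cast this

lemma summable_norm_taylorCoeff_smul_pow {f : ℂ → ℂ} (hf : DifferentiableOn ℂ f (ball 0 1))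
    {a : 𝔸} (ha : spectralRadius ℂ a < 1) :
    Summable fun k => ‖taylorCoeff f k • a ^ k‖ := by
  obtain ⟨r, hρr, hr₁⟩ := ENNReal.lt_iff_exists_nnreal_btwn.mp ha
  refine .of_norm_bounded_eventually_nat
    (summable_norm_taylorCoeff_mul_pow hf r.coe_nonneg (by exact_mod_cast hr₁)) ?_
  filter_upwards [eventually_norm_pow_le_of_spectralRadius_lt hρr] with k hk
  rw [norm_norm]
  exact (norm_smul_le _ _).trans (by gcongr)

lemma tsum_taylorCoeff_mul_smul_pow {f g : ℂ → ℂ} (hf : DifferentiableOn ℂ f (ball 0 1))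
    (hg : DifferentiableOn ℂ g (ball 0 1)) {a : 𝔸} (ha : spectralRadius ℂ a < 1) :
    ∑' k, taylorCoeff (fun z => f z * g z) k • a ^ k =
      (∑' k, taylorCoeff f k • a ^ k) * ∑' k, taylorCoeff g k • a ^ k := by
  rw [tsum_mul_tsum_eq_tsum_sum_range_of_summable_norm
    (summable_norm_taylorCoeff_smul_pow hf ha) (summable_norm_taylorCoeff_smul_pow hg ha)]
  refine tsum_congr fun n => ?_
  rw [taylorCoeff_mul (hf.contDiffAt_zero n) (hg.contDiffAt_zero n), Finset.sum_smul]
  refine Finset.sum_congr rfl fun k hk => ?_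
  rw [smul_mul_smul_comm, ← pow_add, Nat.add_sub_cancel' (Nat.lt_succ_iff.mp (mem_range.mp hk))]

lemma tsum_taylorCoeff_sum_smul_pow {ι : Type*} {s : Finset ι} {f : ι → ℂ → ℂ}
    (hf : ∀ i ∈ s, DifferentiableOn ℂ (f i) (ball 0 1)) {a : 𝔸} (ha : spectralRadius ℂ a < 1) :
    ∑' k, taylorCoeff (fun z => ∑ i ∈ s, f i z) k • a ^ k =
      ∑ i ∈ s, ∑' k, taylorCoeff (f i) k • a ^ k := by
  simp_rw [taylorCoeff_sum fun i hi => (hf i hi).contDiffAt_zero _, Finset.sum_smul]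
  exact Summable.tsum_finsetSum fun i hi =>
    (summable_norm_taylorCoeff_smul_pow (hf i hi) ha).of_norm

end BanachAlgebra

section Matrix

variable {d : ℕ} {A : Matrix (Fin d) (Fin d) ℂ}

lemma matApply_const (c : ℂ) : matApply (fun _ => c) A = c • 1 := by
  rw [matApply_eq_tsum, tsum_eq_single 0 fun k hk => by simp [taylorCoeff_const, hk]]
  simp [taylorCoeff_const]

lemma matApply_const_mul (c : ℂ) (f : ℂ → ℂ) :
    matApply (fun z => c * f z) A = c • matApply f A := by
  simp only [matApply_eq_tsum, taylorCoeff_const_mul, mul_smul, tsum_const_smul'']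

-- The statements below do not involve a norm; this one only makes matrices a Banach algebra.
attribute [local instance] Matrix.linftyOpNormedRing Matrix.linftyOpNormedAlgebra

lemma matApply_mul (hA : ∀ μ ∈ spectrum ℂ A, ‖μ‖ < 1) {f g : ℂ → ℂ}
    (hf : DifferentiableOn ℂ f (ball 0 1)) (hg : DifferentiableOn ℂ g (ball 0 1)) :
    matApply (fun z => f z * g z) A = matApply f A * matApply g A :=
  tsum_taylorCoeff_mul_smul_pow hf hg (spectralRadius_lt_one_of_forall_norm_lt hA)

lemma matApply_sum (hA : ∀ μ ∈ spectrum ℂ A, ‖μ‖ < 1) {ι : Type*} {s : Finset ι}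
    {f : ι → ℂ → ℂ} (hf : ∀ i ∈ s, DifferentiableOn ℂ (f i) (ball 0 1)) :
    matApply (fun z => ∑ i ∈ s, f i z) A = ∑ i ∈ s, matApply (f i) A :=
  tsum_taylorCoeff_sum_smul_pow hf (spectralRadius_lt_one_of_forall_norm_lt hA)

end Matrix

open scoped ComplexConjugate
open Fintype (card)

lemma HinfOn.const (c : ℂ) : HinfOn fun _ => c :=
  ⟨differentiableOn_const c, ‖c‖, fun _ _ => le_rfl⟩

lemma HinfOn.add {f g : ℂ → ℂ} (hf : HinfOn f) (hg : HinfOn g) : HinfOn fun z => f z + g z := by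
  obtain ⟨hf, C, hC⟩ := hf
  obtain ⟨hg, D, hD⟩ := hg
  exact ⟨hf.add hg, C + D, fun z hz => (norm_add_le _ _).trans (add_le_add (hC z hz) (hD z hz))⟩

lemma HinfOn.mul {f g : ℂ → ℂ} (hf : HinfOn f) (hg : HinfOn g) : HinfOn fun z => f z * g z := by
  obtain ⟨hf, C, hC⟩ := hf
  obtain ⟨hg, D, hD⟩ := hg
  have hC₀ : 0 ≤ C := (norm_nonneg _).trans (hC 0 (mem_ball_self one_pos))
  exact ⟨hf.mul hg, C * D, fun z hz => by
    rw [norm_mul]; exact mul_le_mul (hC z hz) (hD z hz) (norm_nonneg _) hC₀⟩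

lemma HinfOn.sum {ι : Type*} {s : Finset ι} {f : ι → ℂ → ℂ} (hf : ∀ i ∈ s, HinfOn (f i)) :
    HinfOn fun z => ∑ i ∈ s, f i z := by
  classical
  induction s using Finset.induction_on with
  | empty => simpa using HinfOn.const 0
  | insert i s hi ih =>
    simp only [Finset.sum_insert hi]
    exact (hf i (mem_insert_self i s)).add (ih fun j hj => hf j (mem_insert_of_mem hj))

namespace AddChar

variable {G : Type*} [AddCommGroup G] [Fintype G]

lemma sum_conj_apply_mul_apply [DecidableEq G] (i j : G) :
    ∑ χ : AddChar G ℂ, conj (χ i) * χ j = if i = j then (card G : ℂ) else 0 := by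
  simp_rw [← map_neg_eq_conj, ← map_add_eq_mul, neg_add_eq_sub, sum_apply_eq_ite, sub_eq_zero,
    eq_comm]

lemma sum_conj_mul_apply [DecidableEq (AddChar G ℂ)] (χ χ' : AddChar G ℂ) :
    ∑ i, conj (χ i) * χ' i = if χ = χ' then (card G : ℂ) else 0 := by
  have h := wInner_cWeight_eq_boole χ χ'
  rw [RCLike.wInner_cWeight_eq_expect, Fintype.expect_eq_sum_div_card] at h
  simp only [RCLike.inner_apply, mul_comm (χ' _)] at h
  rw [div_eq_iff (by simp)] at h
  rw [h]
  split_ifs <;> simp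

lemma sum_norm_sq_sum_conj_mul (w : AddChar G ℂ → ℂ) :
    ∑ i, ‖∑ χ, conj (χ i) * w χ‖ ^ 2 = card G * ∑ χ, ‖w χ‖ ^ 2 := by
  classical
  apply Complex.ofReal_injective
  push_cast
  calc ∑ i, ((‖∑ χ, conj (χ i) * w χ‖ : ℂ)) ^ 2
      = ∑ χ, ∑ χ', w χ * conj (w χ') * ∑ i, conj (χ i) * χ' i := by
        simp_rw [← Complex.mul_conj', map_sum, map_mul, Complex.conj_conj, Finset.sum_mul_sum,
          Finset.mul_sum]
        rw [Finset.sum_comm]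
        refine Finset.sum_congr rfl fun χ _ => ?_
        rw [Finset.sum_comm]
        refine Finset.sum_congr rfl fun χ' _ => Finset.sum_congr rfl fun i _ => by ring
    _ = card G * ∑ χ, (‖w χ‖ : ℂ) ^ 2 := by
        simp_rw [sum_conj_mul_apply, mul_ite, mul_zero, Finset.sum_ite_eq, if_pos (mem_univ _),
          Complex.mul_conj', Finset.mul_sum, mul_comm]

end AddChar

theorem exists_sum_norm_sq_le_of_interpolating_characters {G : Type*} [AddCommGroup G]
    [Fintype G] [DecidableEq G] {d : G → ℕ} (A : ∀ j, Matrix (Fin (d j)) (Fin (d j)) ℂ)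
    (hA : ∀ j, ∀ μ ∈ spectrum ℂ (A j), ‖μ‖ < 1) {M : ℝ}
    (hψ : ∀ χ : AddChar G ℂ, ∃ ψ : ℂ → ℂ, HinfOn ψ ∧ (∀ z ∈ ball (0 : ℂ) 1, ‖ψ z‖ ≤ M) ∧
      ∀ j, matApply ψ (A j) = χ j • 1) :
    ∃ F : G → ℂ → ℂ, (∀ i, HinfOn (F i)) ∧
      (∀ i j, matApply (F i) (A j) = if i = j then 1 else 0) ∧
      ∀ z ∈ ball (0 : ℂ) 1, ∑ i, ‖F i z‖ ^ 2 ≤ M ^ 2 := by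
  choose ψ hψ hψM hψA using hψ
  have hcard : (card G : ℂ) ≠ 0 := by simp
  have hterm (i : G) (χ : AddChar G ℂ) : HinfOn fun z => conj (χ i) * ψ χ z :=
    (HinfOn.const _).mul (hψ χ)
  refine ⟨fun i z => (card G : ℂ)⁻¹ * ∑ χ, conj (χ i) * ψ χ z,
    fun i => (HinfOn.const _).mul (HinfOn.sum fun χ _ => hterm i χ), fun i j => ?_,
    fun z hz => ?_⟩
  · rw [matApply_const_mul, matApply_sum (hA j) fun χ _ => (hterm i χ).1]
    simp_rw [matApply_const_mul, hψA, smul_smul, ← Finset.sum_smul,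
      AddChar.sum_conj_apply_mul_apply]
    split_ifs <;> simp [hcard]
  · calc ∑ i, ‖(card G : ℂ)⁻¹ * ∑ χ, conj (χ i) * ψ χ z‖ ^ 2
        = (card G : ℝ)⁻¹ * ∑ χ, ‖ψ χ z‖ ^ 2 := by
          simp_rw [norm_mul, norm_inv, Complex.norm_natCast, mul_pow, ← Finset.mul_sum,
            AddChar.sum_norm_sq_sum_conj_mul]
          field_simp
      _ ≤ (card G : ℝ)⁻¹ * ∑ _χ : AddChar G ℂ, M ^ 2 := by
          gcongr with χ
          exact hψM χ z hz
      _ = M ^ 2 := by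
          simp [AddChar.card_eq]

theorem exists_finite_beurling_functions_general
    (d : ℕ → ℕ) (A : ∀ n : ℕ, Matrix (Fin (d n)) (Fin (d n)) ℂ)
    (hA : ∀ n, ∀ μ ∈ spectrum ℂ (A n), ‖μ‖ < 1)
    (M : ℝ)
    (hInt : ∀ φ : ℕ → ℂ → ℂ, (∀ n, HinfOn (φ n)) →
        (∀ n, ∀ z ∈ Metric.ball (0 : ℂ) 1, ‖φ n z‖ ≤ 1) →
        ∃ ψ : ℂ → ℂ, HinfOn ψ ∧
          (∀ z ∈ Metric.ball (0 : ℂ) 1, ‖ψ z‖ ≤ M) ∧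
          ∀ n, matApply ψ (A n) = matApply (φ n) (A n))
    (N : ℕ) (hN : 0 < N) (ε : ℝ) (hε : 0 < ε) :
    ∃ f : Fin N → ℂ → ℂ, (∀ i, HinfOn (f i)) ∧
      (∀ i j : Fin N, matApply (f i) (A j) =
        if i = j then (1 : Matrix (Fin (d j)) (Fin (d j)) ℂ) else 0) ∧
      (∀ z ∈ Metric.ball (0 : ℂ) 1, ∑ j : Fin N, ‖f j z‖ ≤ M ^ 2 + ε) := by
  have : NeZero N := ⟨hN.ne'⟩
  obtain ⟨F, hF, hFA, hFz⟩ := exists_sum_norm_sq_le_of_interpolating_characters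
    (fun j : Fin N => A j) (fun j => hA j) fun χ => by
      obtain ⟨ψ, hψ, hψM, hψA⟩ := hInt (fun n _ => χ (Fin.ofNat N n)) (fun _ => HinfOn.const _)
        fun n _ _ => (AddChar.norm_apply χ _).le
      exact ⟨ψ, hψ, hψM, fun j => by rw [hψA, matApply_const, Fin.ofNat_val_eq_self]⟩
  refine ⟨fun i z => F i z * F i z, fun i => (hF i).mul (hF i), fun i j => ?_, fun z hz => ?_⟩
  · rw [matApply_mul (hA j) (hF i).1 (hF i).1, hFA]
    split_ifs <;> simp
  · simp_rw [norm_mul, ← sq]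
    linarith [hFz z hz]

/-- Finite P. Beurling functions with bound `M² + ε`, where `M` is an interpolation
constant for the sequence of matrices. -/
theorem exists_finite_beurling_functions
    (d : ℕ → ℕ) (A : ∀ n : ℕ, Matrix (Fin (d n)) (Fin (d n)) ℂ)
    (hA : ∀ n, ∀ μ ∈ spectrum ℂ (A n), ‖μ‖ < 1)
    (M : ℝ) (hM : 0 < M)
    (hInt : ∀ φ : ℕ → ℂ → ℂ, (∀ n, HinfOn (φ n)) →
        (∀ n, ∀ z ∈ Metric.ball (0 : ℂ) 1, ‖φ n z‖ ≤ 1) →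
        ∃ ψ : ℂ → ℂ, HinfOn ψ ∧
          (∀ z ∈ Metric.ball (0 : ℂ) 1, ‖ψ z‖ ≤ M) ∧
          ∀ n, matApply ψ (A n) = matApply (φ n) (A n))
    (N : ℕ) (hN : 0 < N) (ε : ℝ) (hε : 0 < ε) :
    ∃ f : Fin N → ℂ → ℂ, (∀ i, HinfOn (f i)) ∧
      (∀ i j : Fin N, matApply (f i) (A j) =
        if i = j then (1 : Matrix (Fin (d j)) (Fin (d j)) ℂ) else 0) ∧
      (∀ z ∈ Metric.ball (0 : ℂ) 1, ∑ j : Fin N, ‖f j z‖ ≤ M ^ 2 + ε) :=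
  exists_finite_beurling_functions_general d A hA M hInt N hN ε hε
end

section
/- Let K be a closed subspace of a complex Hilbert space H and let x ∈ H with x ∉ K. Then 1/dist(x, K) = inf{ ‖y‖ : y ∈ K^⊥ and ⟨y, x⟩ = 1 }. -/
/-!
Let `w` be the orthogonal projection of `x` onto `Kᗮ`. Then `x - w` is the nearest point of the
closure of `K`, so `dist(x, K) = ‖w‖`, and `⟪y, x⟫ = ⟪y, w⟫` for every `y ∈ Kᗮ`. By
Cauchy–Schwarz every such `y` with `⟪y, w⟫ = 1` has `‖y‖ ≥ 1 / ‖w‖`, with equality at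
`y = w / ‖w‖²`. When `x` lies in the closure of `K`, `w = 0`, the set is empty and both sides are
the junk value `0`.
-/

open Metric

namespace Submodule

variable {𝕜 E : Type*} [RCLike 𝕜] [NormedAddCommGroup E] [InnerProductSpace 𝕜 E]

local notation "⟪" x ", " y "⟫" => inner 𝕜 x y

theorem infDist_eq_norm_sub_starProjection (U : Submodule 𝕜 E) [U.HasOrthogonalProjection]
    (x : E) : infDist x (U : Set E) = ‖x - U.starProjection x‖ := by
  rw [infDist_eq_iInf, starProjection_minimal]
  simp [dist_eq_norm]

theorem infDist_eq_norm_starProjection_orthogonal [CompleteSpace E] (K : Submodule 𝕜 E)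
    (x : E) : infDist x (K : Set E) = ‖Kᗮ.starProjection x‖ := by
  rw [← infDist_closure, ← topologicalClosure_coe, ← orthogonal_orthogonal_eq_closure,
    infDist_eq_norm_sub_starProjection, starProjection_orthogonal_val, sub_sub_cancel]

theorem inner_starProjection_right_of_mem (L : Submodule 𝕜 E) [L.HasOrthogonalProjection]
    {y : E} (hy : y ∈ L) (x : E) : ⟪y, L.starProjection x⟫ = ⟪y, x⟫ := by
  rw [← inner_starProjection_left_eq_right, starProjection_eq_self_iff.mpr hy]

theorem isLeast_norm_of_inner_eq_one (L : Submodule 𝕜 E) {w : E} (hw : w ∈ L) (hw0 : w ≠ 0) :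
    IsLeast {r : ℝ | ∃ y ∈ L, ⟪y, w⟫ = 1 ∧ ‖y‖ = r} (1 / ‖w‖) := by
  have hnorm : 0 < ‖w‖ := norm_pos_iff.mpr hw0
  refine ⟨⟨((‖w‖ ^ 2 : ℝ) : 𝕜)⁻¹ • w, L.smul_mem _ hw, ?_, ?_⟩, ?_⟩
  · rw [inner_smul_left, inner_self_eq_norm_sq_to_K]
    simp [hw0]
  · rw [norm_smul, norm_inv, RCLike.norm_ofReal, abs_of_pos (by positivity)]
    field_simp
  · rintro _ ⟨y, -, hyw, rfl⟩
    have : 1 ≤ ‖y‖ * ‖w‖ := by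
      simpa [hyw] using norm_inner_le_norm (𝕜 := 𝕜) y w
    rwa [div_le_iff₀ hnorm]

theorem sInf_norm_of_inner_eq_one (L : Submodule 𝕜 E) {w : E} (hw : w ∈ L) :
    sInf {r : ℝ | ∃ y ∈ L, ⟪y, w⟫ = 1 ∧ ‖y‖ = r} = 1 / ‖w‖ := by
  rcases eq_or_ne w 0 with rfl | hw0
  · simp
  · exact (L.isLeast_norm_of_inner_eq_one hw hw0).csInf_eq

end Submodule

open Submodule in
theorem one_div_dist_eq_inf_norm_general
    {H : Type*} [NormedAddCommGroup H] [InnerProductSpace ℂ H] [CompleteSpace H]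
    (K : Submodule ℂ H)
    (x : H) :
    1 / Metric.infDist x (K : Set H) =
      sInf {r : ℝ | ∃ y ∈ Kᗮ, (inner ℂ y x : ℂ) = 1 ∧ ‖y‖ = r} := by
  have hset : {r : ℝ | ∃ y ∈ Kᗮ, (inner ℂ y x : ℂ) = 1 ∧ ‖y‖ = r} =
      {r : ℝ | ∃ y ∈ Kᗮ, (inner ℂ y (Kᗮ.starProjection x) : ℂ) = 1 ∧ ‖y‖ = r} := by
    ext r
    exact exists_congr fun y => and_congr_right fun hy => by
      rw [Kᗮ.inner_starProjection_right_of_mem hy]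
  rw [hset, Kᗮ.sInf_norm_of_inner_eq_one (Kᗮ.starProjection_apply_mem x),
    infDist_eq_norm_starProjection_orthogonal]

/-- For a closed subspace `K` of a complex Hilbert space and `x ∉ K`, the reciprocal of the
distance from `x` to `K` equals the infimum of norms of `y ∈ K^⊥` with `⟨y, x⟩ = 1`. -/
theorem one_div_dist_eq_inf_norm
    {H : Type*} [NormedAddCommGroup H] [InnerProductSpace ℂ H] [CompleteSpace H]
    (K : Submodule ℂ H) (hK : IsClosed (K : Set H))
    (x : H) (hx : x ∉ K) :
    1 / Metric.infDist x (K : Set H) =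
      sInf {r : ℝ | ∃ y ∈ Kᗮ, (inner ℂ y x : ℂ) = 1 ∧ ‖y‖ = r} :=
  one_div_dist_eq_inf_norm_general K x
end
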